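/- arXiv:1403.5462 — 6 statements merged into one kernel-verified Lean document; each statement's English description precedes it below -/
import Mathlib

section
/- For natural numbers n and k, the number of surjective functions from Fin k to Fin n, viewed as an integer, equals the alternating sum ∑_{j=0}^{n} (-1)^j · (n choose j) · (n - j)^k. -/
/-!
A map `f : α → β` is surjective iff it avoids no `b : β`. Inclusion–exclusion over the set `t` of
avoided values reduces the count to the maps avoiding all of `t`, i.e. the maps `α → tᶜ`, of which
there are `(|β| - |t|) ^ |α|`; this depends only on `|t|`, so the sum over `t` collapses to a sum
over `j = |t|` weighted by `choose |β| j`.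
-/

open Finset

variable {α β : Type*} [Fintype α] [Fintype β] [DecidableEq α] [DecidableEq β]

theorem card_inf_filter_forall_ne (t : Finset β) :
    #(t.inf fun b ↦ ({f : α → β | ∀ a, f a ≠ b} : Finset _)) = (Fintype.card β - #t) ^ Fintype.card α := by
  have : (t.inf fun b ↦ ({f : α → β | ∀ a, f a ≠ b} : Finset _)) = Fintype.piFinset fun _ ↦ tᶜ := by
    ext f
    simp only [mem_inf, mem_filter, mem_univ, true_and, Fintype.mem_piFinset, mem_compl]
    exact ⟨fun h a ha ↦ h _ ha a rfl, fun h b hb a hab ↦ h a (hab ▸ hb)⟩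
  rw [this, Fintype.card_piFinset, prod_const, card_univ, card_compl]

theorem filter_surjective_eq_inf_compl :
    ({f : α → β | Function.Surjective f} : Finset _) =
      univ.inf fun b ↦ ({f : α → β | ∀ a, f a ≠ b} : Finset _)ᶜ := by
  ext f
  simp only [mem_filter, mem_univ, true_and, mem_inf, mem_compl, not_forall, not_not, forall_const]
  rfl

theorem card_surjective_eq_sum :
    (#({f : α → β | Function.Surjective f} : Finset _) : ℤ) =
      ∑ j ∈ range (Fintype.card β + 1),
        (-1 : ℤ) ^ j * (Fintype.card β).choose j * ((Fintype.card β - j : ℕ) : ℤ) ^ Fintype.card α := by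
  rw [filter_surjective_eq_inf_compl, inclusion_exclusion_card_inf_compl]
  simp_rw [card_inf_filter_forall_ne, Nat.cast_pow]
  rw [sum_powerset_apply_card (f := fun j ↦ (-1 : ℤ) ^ j * ((Fintype.card β - j : ℕ) : ℤ) ^ Fintype.card α)]
  simp only [card_univ, nsmul_eq_mul]
  exact sum_congr rfl fun j _ ↦ by ring

theorem stmt_2 (n k : ℕ) :
    (Nat.card {γ : Fin k → Fin n // Function.Surjective γ} : ℤ) =
      ∑ j ∈ Finset.range (n + 1),
        (-1 : ℤ) ^ j * (n.choose j : ℤ) * ((n - j : ℕ) : ℤ) ^ k := by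
  classical
  rw [Nat.card_eq_fintype_card, Fintype.card_subtype, card_surjective_eq_sum]
  simp only [Fintype.card_fin]
end

section
/- The series ∑_{k=2}^{∞} k · (1 − (2^k − 2)/2^k) of real numbers converges and has sum 3. -/
/-! The complement probability is `2 / 2^(k+2)`, so the series is `∑ (k+2) (1/2)^(k+1)`, which is
read off the arithmetico-geometric series `∑ (n + c) rⁿ = r/(1-r)² + c/(1-r)` at `r = 1/2`, `c = 2`. -/

theorem hasSum_coe_add_mul_geometric_of_norm_lt_one {𝕜 : Type*} [NormedField 𝕜] [CompleteSpace 𝕜]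
    {r : 𝕜} (hr : ‖r‖ < 1) (c : 𝕜) :
    HasSum (fun n : ℕ ↦ (n + c) * r ^ n) (r / (1 - r) ^ 2 + c / (1 - r)) := by
  have hgeom := (hasSum_geometric_of_norm_lt_one hr).mul_left c
  convert (hasSum_coe_mul_geometric_of_norm_lt_one hr).add hgeom using 1
  · ext n
    ring
  · rw [div_eq_mul_inv c]

theorem one_sub_two_pow_sub_two_div (n : ℕ) :
    1 - ((2 : ℝ) ^ n - 2) / 2 ^ n = 2 / 2 ^ n := by
  field_simp
  ring

theorem stmt_7 :
    HasSum
      (fun k : ℕ =>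
        ((k + 2 : ℕ) : ℝ) * (1 - ((2 : ℝ) ^ (k + 2) - 2) / (2 : ℝ) ^ (k + 2)))
      3 := by
  have hseries := (hasSum_coe_add_mul_geometric_of_norm_lt_one (r := (1 / 2 : ℝ))
    (by norm_num) 2).mul_left (1 / 2)
  have hterm (k : ℕ) : ((k + 2 : ℕ) : ℝ) * (1 - ((2 : ℝ) ^ (k + 2) - 2) / (2 : ℝ) ^ (k + 2)) =
      1 / 2 * ((k + 2) * (1 / 2) ^ k) := by
    rw [one_sub_two_pow_sub_two_div, one_div_pow]
    push_cast
    field_simp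
    ring
  rw [show (1 / 2 * (1 / 2 / (1 - 1 / 2) ^ 2 + 2 / (1 - 1 / 2)) : ℝ) = 3 by norm_num] at hseries
  simp only [hterm]
  exact hseries
end

section
/- Let λ₁, λ₂, λ₃ be real numbers with λ₂ ≠ λ₃, let A = diag(λ₁, λ₂, λ₃), and let b₁ = (0,1,1)ᵀ and b₂ = (1,0,0)ᵀ be the columns of the 3×2 matrix B. Then: (i) the pair (A, B) is controllable, i.e., the six vectors A^j *ᵥ b_i for j ∈ {0,1,2}, i ∈ {1,2} span ℝ³; but (ii) the 3×3 matrix whose columns are b₁, A *ᵥ b₂, and A² *ᵥ b₂ has determinant zero, so the channel sequence that uses channel 2 at the first two steps and channel 1 at the last step (a sequence in which both channels appear) does not produce a spanning family. In particular the system is not random channel controllable. -/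
/-! Controllability follows because `b₂`, `b₁` and `A b₁` already span `ℝ³`: the determinant of
these three vectors is `λ₃ - λ₂ ≠ 0`. On the other hand `b₁`, `A b₂ = λ₁ b₂` and `A² b₂ = λ₁² b₂`
involve `b₂` only through its multiples, so these three vectors are dependent. -/

open Matrix

theorem Matrix.span_range_eq_top_iff_det_ne_zero {K n : Type*} [Field K] [Fintype n]
    [DecidableEq n] (M : Matrix n n K) :
    Submodule.span K (Set.range M) = ⊤ ↔ M.det ≠ 0 := by
  rw [← isUnit_iff_ne_zero, ← isUnit_iff_isUnit_det, ← linearIndependent_rows_iff_isUnit]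
  have hcard : Fintype.card n = Module.finrank K (n → K) :=
    (Module.finrank_fintype_fun_eq_card K).symm
  exact ⟨fun h => linearIndependent_of_top_le_span_of_card_eq_finrank h.ge hcard,
    fun h => h.span_eq_top_of_card_eq_finrank' hcard⟩

theorem stmt_9 (l1 l2 l3 : ℝ) (h23 : l2 ≠ l3) :
    -- A = diag(λ₁, λ₂, λ₃), b₁ = (0,1,1)ᵀ, b₂ = (1,0,0)ᵀ
    (Submodule.span ℝ
        (Set.range fun p : Fin 3 × Fin 2 =>
          (Matrix.diagonal ![l1, l2, l3] ^ (p.1 : ℕ)).mulVec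
            (![![(0 : ℝ), 1, 1], ![1, 0, 0]] p.2)) = ⊤) ∧
      -- the 3×3 matrix with columns b₁, A b₂, A² b₂ has determinant zero
      (Matrix.det
          (Matrix.of ![![(0 : ℝ), 1, 1],
            (Matrix.diagonal ![l1, l2, l3]).mulVec ![1, 0, 0],
            (Matrix.diagonal ![l1, l2, l3] ^ 2).mulVec ![1, 0, 0]]).transpose = 0) ∧
      -- hence the channel sequence using channel 2 twice then channel 1 does not span
      Submodule.span ℝ
          (Set.range fun j : Fin 3 =>
            (Matrix.diagonal ![l1, l2, l3] ^ (j : ℕ)).mulVec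
              (![![(0 : ℝ), 1, 1], ![1, 0, 0]] (![0, 1, 1] j))) ≠ ⊤ := by
  have hspan : Submodule.span ℝ (Set.range (Matrix.of ![![(0 : ℝ), 1, 1], ![0, l2, l3],
      ![1, 0, 0]])) = ⊤ := by
    rw [span_range_eq_top_iff_det_ne_zero]
    simpa [det_fin_three, sub_eq_zero] using h23.symm
  refine ⟨?_, ?_⟩
  · refine eq_top_iff.2 (hspan ▸ Submodule.span_mono ?_)
    rintro _ ⟨i, rfl⟩
    refine ⟨![(0, 0), (1, 0), (0, 1)] i, ?_⟩
    ext k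
    fin_cases i <;> fin_cases k <;> simp [mulVec_diagonal]
  rw [and_iff_left_of_imp]
  · simp [det_fin_three, diagonal_pow, mulVec_diagonal]
  intro hsingular htop
  rw [det_transpose] at hsingular
  refine (span_range_eq_top_iff_det_ne_zero _).1 ?_ hsingular
  rw [← htop]
  congr 2
  funext j
  fin_cases j <;> simp [pow_two] <;> rfl
end

section
/- Let A be an invertible n × n real matrix and b : Fin m → (Fin n → ℝ) be such that the pair (A, B) is controllable, i.e., the vectors A^j *ᵥ b_i for 0 ≤ j < n and i ∈ Fin m span ℝ^n. Then there exist a natural number k and a function γ : Fin k → Fin m such that the family (A^j *ᵥ b_{γ(j)})_{j : Fin k} spans ℝ^n. -/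
open Polynomial Matrix Finset

theorem stmt_10 (n m : ℕ) (A : Matrix (Fin n) (Fin n) ℝ) (hA : IsUnit A)
    (b : Fin m → (Fin n → ℝ))
    (hctrl : Submodule.span ℝ
        (Set.range fun p : Fin n × Fin m => (A ^ (p.1 : ℕ)).mulVec (b p.2)) = ⊤) :
    ∃ (k : ℕ) (γ : Fin k → Fin m),
      Submodule.span ℝ
        (Set.range fun j : Fin k => (A ^ (j : ℕ)).mulVec (b (γ j))) = ⊤ := by
  classical
  rcases Nat.eq_zero_or_pos n with hn | hn
  · subst hn
    exact ⟨0, Fin.elim0, Subsingleton.elim _ _⟩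
  set f : Module.End ℝ (Fin n → ℝ) := Matrix.toLinAlgEquiv' A with hfdef
  have hpow : ∀ (j : ℕ) (v : Fin n → ℝ), (A ^ j).mulVec v = (f ^ j) v := by
    intro j v
    have : Matrix.toLinAlgEquiv' (A ^ j) = f ^ j := map_pow Matrix.toLinAlgEquiv' A j
    rw [← this, Matrix.toLinAlgEquiv'_apply]
  have hinj : Function.Injective f := by
    have : Function.Injective A.mulVec := Matrix.mulVec_injective_iff_isUnit.mpr hA
    intro x y hxy
    exact this hxy
  -- The Krylov subspaces
  set K : Fin m → Submodule ℝ (Fin n → ℝ) :=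
    fun i => Submodule.span ℝ (Set.range fun r : Fin n => (f ^ (r : ℕ)) (b i)) with hKdef
  -- Cayley-Hamilton: f^n v lies in the Krylov space of v
  have hCH : ∀ v : Fin n → ℝ,
      (f ^ n) v ∈ Submodule.span ℝ (Set.range fun r : Fin n => (f ^ (r : ℕ)) v) := by
    intro v
    have h0 : aeval f A.charpoly = 0 := by
      have := Matrix.aeval_self_charpoly A
      have h := aeval_algHom_apply (Matrix.toLinAlgEquiv'
        (n := Fin n) (R := ℝ)) A A.charpoly
      rw [this, map_zero] at h
      exact h
    have hdeg : A.charpoly.natDegree = n := by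
      rw [Matrix.charpoly_natDegree_eq_dim, Fintype.card_fin]
    have hco : A.charpoly.coeff n = 1 := by
      have := A.charpoly_monic.coeff_natDegree
      rwa [hdeg] at this
    have hsum : (aeval f A.charpoly : Module.End ℝ (Fin n → ℝ)) =
        ∑ i ∈ Finset.range (A.charpoly.natDegree + 1), A.charpoly.coeff i • f ^ i :=
      aeval_eq_sum_range f
    rw [h0, hdeg, Finset.sum_range_succ, hco, one_smul] at hsum
    have hfn : f ^ n = -∑ i ∈ Finset.range n, A.charpoly.coeff i • f ^ i :=
      eq_neg_of_add_eq_zero_right hsum.symm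
    have : (f ^ n) v = ∑ i ∈ Finset.range n, (-(A.charpoly.coeff i)) • (f ^ i) v := by
      rw [hfn]
      simp [neg_smul]
    rw [this]
    refine Submodule.sum_mem _ fun i hi => Submodule.smul_mem _ _ (Submodule.subset_span ?_)
    exact ⟨⟨i, Finset.mem_range.mp hi⟩, rfl⟩
  -- Invariance of Krylov spaces under f
  have hinv : ∀ i, Submodule.map f (K i) ≤ K i := by
    intro i
    rw [hKdef, Submodule.map_span, Submodule.span_le]
    rintro _ ⟨_, ⟨r, rfl⟩, rfl⟩
    have : f ((f ^ (r : ℕ)) (b i)) = (f ^ ((r : ℕ) + 1)) (b i) := by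
      rw [pow_succ', Module.End.mul_apply]
    rw [this]
    rcases Nat.lt_or_ge ((r : ℕ) + 1) n with h | h
    · exact Submodule.subset_span ⟨⟨(r : ℕ) + 1, h⟩, rfl⟩
    · have h' : (r : ℕ) + 1 = n := by have := r.2; omega
      rw [h']; exact hCH (b i)
  -- map f (K i) = K i using injectivity and finite dimension
  have hfK : ∀ i, Submodule.map f (K i) = K i := by
    intro i
    refine Submodule.eq_of_le_of_finrank_eq (hinv i) ?_
    exact (((K i).equivMapOfInjective f hinj).finrank_eq).symm
  have hKmap : ∀ (i) (t : ℕ), Submodule.map (f ^ t) (K i) = K i := by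
    intro i t
    induction t with
    | zero => rw [pow_zero, Module.End.one_eq_id, Submodule.map_id]
    | succ t ih =>
      rw [pow_succ', Module.End.mul_eq_comp, Submodule.map_comp, ih, hfK]
  -- build the sequence
  refine ⟨n * m, fun j => ⟨(j : ℕ) / n, ?_⟩, ?_⟩
  · exact (Nat.div_lt_iff_lt_mul hn).mpr (by simp [Nat.mul_comm])
  set γ : Fin (n * m) → Fin m := fun j => ⟨(j : ℕ) / n,
    (Nat.div_lt_iff_lt_mul hn).mpr (by simp [Nat.mul_comm])⟩ with hγdef
  set S := Submodule.span ℝ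
    (Set.range fun j : Fin (n * m) => (A ^ (j : ℕ)).mulVec (b (γ j))) with hSdef
  have hKS : ∀ i : Fin m, K i ≤ S := by
    intro i
    rw [← hKmap i (n * (i : ℕ)), hKdef, Submodule.map_span, Submodule.span_le]
    rintro _ ⟨_, ⟨r, rfl⟩, rfl⟩
    have hjlt : n * (i : ℕ) + (r : ℕ) < n * m := by
      have h1 : (i : ℕ) < m := i.2
      have h2 : (r : ℕ) < n := r.2
      calc n * (i : ℕ) + (r : ℕ) < n * (i : ℕ) + n := by omega
        _ = n * ((i : ℕ) + 1) := by ring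
        _ ≤ n * m := Nat.mul_le_mul_left n h1
    have hγj : γ ⟨n * (i : ℕ) + (r : ℕ), hjlt⟩ = i := by
      apply Fin.ext
      simp only [hγdef]
      rw [Nat.mul_add_div hn, Nat.div_eq_of_lt r.2, add_zero]
    have : (f ^ (n * (i : ℕ))) ((f ^ (r : ℕ)) (b i))
        = (A ^ ((⟨n * (i : ℕ) + (r : ℕ), hjlt⟩ : Fin (n * m)) : ℕ)).mulVec
          (b (γ ⟨n * (i : ℕ) + (r : ℕ), hjlt⟩)) := by
      rw [hγj]
      simp only [hpow]
      rw [← Module.End.mul_apply, ← pow_add]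
    rw [this]
    exact Submodule.subset_span ⟨⟨n * (i : ℕ) + (r : ℕ), hjlt⟩, rfl⟩
  rw [eq_top_iff, ← hctrl, Submodule.span_le]
  rintro _ ⟨⟨r, i⟩, rfl⟩
  refine hKS i ?_
  show (A ^ (r : ℕ)).mulVec (b i) ∈ K i
  rw [hpow]
  exact Submodule.subset_span ⟨r, rfl⟩
end

section
/- Let A be an invertible n × n real matrix and c : Fin q → (Fin n → ℝ) be such that the pair (A, C) is observable, i.e., the vectors (Aᵀ)^j *ᵥ c_i for 0 ≤ j < n and i ∈ Fin q span ℝ^n. Then there exist a natural number k and a function γ : Fin k → Fin q such that the family ((Aᵀ)^j *ᵥ c_{γ(j)})_{j : Fin k} spans ℝ^n. -/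
open Polynomial Matrix Submodule

/-- Every power of `M` applied to `v` lies in the span of the first `n` powers applied to `v`. -/
lemma aux_pow_mem (n : ℕ) (M : Matrix (Fin n) (Fin n) ℝ) (v : Fin n → ℝ) (k : ℕ) :
    (M ^ k) *ᵥ v ∈ Submodule.span ℝ
      (Set.range fun m : Fin n => (M ^ (m : ℕ)) *ᵥ v) := by
  by_cases h0 : (X ^ k %ₘ M.charpoly : ℝ[X]) = 0
  · have hz : M ^ k = 0 := by
      rw [Matrix.pow_eq_aeval_mod_charpoly, h0, map_zero]
    simp [hz]
  · rcases Nat.eq_zero_or_pos n with hn | hn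
    · subst hn
      have : (M ^ k) *ᵥ v = 0 := Subsingleton.elim _ _
      simp [this]
    have hdeg : (X ^ k %ₘ M.charpoly : ℝ[X]).natDegree < n := by
      have hmono := M.charpoly_monic
      have h1 : (X ^ k %ₘ M.charpoly : ℝ[X]).degree < M.charpoly.degree :=
        Polynomial.degree_modByMonic_lt _ hmono
      have h2 : (X ^ k %ₘ M.charpoly : ℝ[X]).natDegree < M.charpoly.natDegree :=
        Polynomial.natDegree_lt_natDegree h0 h1
      simpa [Matrix.charpoly_natDegree_eq_dim] using h2
    rw [Matrix.pow_eq_aeval_mod_charpoly, Polynomial.aeval_eq_sum_range' hdeg]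
    rw [show (∑ i ∈ Finset.range n, (X ^ k %ₘ M.charpoly : ℝ[X]).coeff i • M ^ i) *ᵥ v
        = ∑ i ∈ Finset.range n, ((X ^ k %ₘ M.charpoly : ℝ[X]).coeff i • M ^ i) *ᵥ v from
      map_sum (Matrix.mulVec.addMonoidHomLeft v) _ (Finset.range n)]
    refine Submodule.sum_mem _ fun i hi => ?_
    rw [Matrix.smul_mulVec]
    refine Submodule.smul_mem _ _ (Submodule.subset_span ?_)
    exact ⟨⟨i, Finset.mem_range.mp hi⟩, rfl⟩

theorem stmt_11 (n q : ℕ) (A : Matrix (Fin n) (Fin n) ℝ) (hA : IsUnit A)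
    (c : Fin q → (Fin n → ℝ))
    (hobs : Submodule.span ℝ
        (Set.range fun p : Fin n × Fin q =>
          (A.transpose ^ (p.1 : ℕ)).mulVec (c p.2)) = ⊤) :
    ∃ (k : ℕ) (γ : Fin k → Fin q),
      Submodule.span ℝ
        (Set.range fun j : Fin k =>
          (A.transpose ^ (j : ℕ)).mulVec (c (γ j))) = ⊤ := by
  rcases Nat.eq_zero_or_pos n with hn | hn
  · subst hn
    exact ⟨0, Fin.elim0, Subsingleton.elim _ _⟩
  -- Aᵀ is invertible
  have hAT : IsUnit A.transpose := by
    rw [Matrix.isUnit_iff_isUnit_det, Matrix.det_transpose, ← Matrix.isUnit_iff_isUnit_det]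
    exact hA
  set T : (Fin n → ℝ) →ₗ[ℝ] (Fin n → ℝ) := A.transpose.mulVecLin with hT
  have hTinj : Function.Injective T := Matrix.mulVec_injective_iff_isUnit.mpr hAT
  have hTsurj : Function.Surjective T :=
    (LinearMap.injective_iff_surjective).mp hTinj
  let e : (Fin n → ℝ) ≃ₗ[ℝ] (Fin n → ℝ) := LinearEquiv.ofBijective T ⟨hTinj, hTsurj⟩
  -- cyclic subspaces
  set U : (Fin n → ℝ) → Submodule ℝ (Fin n → ℝ) := fun v =>
    Submodule.span ℝ (Set.range fun m : Fin n => (A.transpose ^ (m : ℕ)) *ᵥ v) with hU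
  have hTapp : ∀ (m : ℕ) (v : Fin n → ℝ), T ((A.transpose ^ m) *ᵥ v)
      = (A.transpose ^ (m + 1)) *ᵥ v := by
    intro m v
    rw [hT, Matrix.mulVecLin_apply, Matrix.mulVec_mulVec, ← pow_succ']
  have hmaple : ∀ v, Submodule.map T (U v) ≤ U v := by
    intro v
    rw [Submodule.map_span, Submodule.span_le]
    rintro x ⟨y, ⟨m, rfl⟩, rfl⟩
    rw [hTapp]
    exact aux_pow_mem n A.transpose v (m + 1)
  have hmapeq : ∀ v, Submodule.map T (U v) = U v := by
    intro v
    have hfe : Submodule.map T (U v) = Submodule.map (e : (Fin n → ℝ) →ₗ[ℝ] _) (U v) := rfl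
    refine Submodule.eq_of_le_of_finrank_le (hmaple v) ?_
    rw [hfe, LinearEquiv.finrank_map_eq]
  have hmapeq_pow : ∀ (r : ℕ) (v), Submodule.map (T ^ r) (U v) = U v := by
    intro r v
    induction r with
    | zero => rw [pow_zero, Module.End.one_eq_id, Submodule.map_id]
    | succ r ih =>
      rw [pow_succ', Module.End.mul_eq_comp, Submodule.map_comp, ih, hmapeq]
  -- power application
  have hTpow : ∀ (r : ℕ) (w : Fin n → ℝ), (T ^ r) w = (A.transpose ^ r) *ᵥ w := by
    intro r
    induction r with
    | zero => intro w; rw [pow_zero, pow_zero]; simp [Matrix.one_mulVec, Module.End.one_apply]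
    | succ r ih =>
      intro w
      rw [pow_succ, Module.End.mul_apply, ih (T w), hT, Matrix.mulVecLin_apply,
        Matrix.mulVec_mulVec, ← pow_succ]
  refine ⟨q * n, fun j => ⟨(j : ℕ) / n, ?_⟩, ?_⟩
  · exact Nat.div_lt_of_lt_mul (by simpa [mul_comm] using j.isLt)
  set S := Submodule.span ℝ
      (Set.range fun j : Fin (q * n) =>
        (A.transpose ^ (j : ℕ)) *ᵥ
          c ⟨(j : ℕ) / n, Nat.div_lt_of_lt_mul (by simpa [mul_comm] using j.isLt)⟩) with hS
  have hUle : ∀ i : Fin q, U (c i) ≤ S := by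
    intro i
    have key : Submodule.map (T ^ ((i : ℕ) * n)) (U (c i)) ≤ S := by
      rw [Submodule.map_span, Submodule.span_le]
      rintro x ⟨y, ⟨m, rfl⟩, rfl⟩
      have hj : (i : ℕ) * n + (m : ℕ) < q * n := by
        calc (i : ℕ) * n + (m : ℕ) < (i : ℕ) * n + n := by
              exact Nat.add_lt_add_left m.isLt _
          _ = ((i : ℕ) + 1) * n := by ring
          _ ≤ q * n := Nat.mul_le_mul_right n i.isLt
      have hdiv : ((i : ℕ) * n + (m : ℕ)) / n = (i : ℕ) := by
        rw [add_comm, Nat.add_mul_div_right _ _ hn, Nat.div_eq_of_lt m.isLt, zero_add]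
      refine Submodule.subset_span ⟨⟨(i : ℕ) * n + (m : ℕ), hj⟩, ?_⟩
      rw [hTpow, Matrix.mulVec_mulVec, ← pow_add]
      simp only [Fin.val_mk]
      exact congrArg (fun y => (A.transpose ^ ((i : ℕ) * n + (m : ℕ))) *ᵥ c y)
        (Fin.val_injective hdiv)
    rw [hmapeq_pow] at key
    exact key
  rw [← top_le_iff, ← hobs, Submodule.span_le]
  rintro x ⟨⟨m, i⟩, rfl⟩
  exact hUle i (Submodule.subset_span ⟨m, rfl⟩)
end

section
/- Let (Ω, 𝒫) be a probability space, p ∈ [0,1], and a, b, x₀ real numbers with x₀ ≠ 0, |p·a + (1−p)·b| < 1 and p·a² + (1−p)·b² > 1. Let ξ : ℕ → Ω → ℝ be an independent family of random variables such that for every i, ξ i takes only the values a and b, with 𝒫(ξ i = a) = p and 𝒫(ξ i = b) = 1 − p, and define x_k = x₀ · ∏_{i < k} ξ i. Then the sequence of means E[x_k] converges to 0 as k → ∞ while the sequence of second moments E[x_k²] tends to +∞ as k → ∞. -/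
/-!
Since `x_k = x₀ ∏_{i<k} ξ_i` with independent factors, both moments factor:
`E[x_k] = x₀ m₁^k` and `E[x_k²] = x₀² m₂^k`, where `m₁ = p a + (1 - p) b` and
`m₂ = p a² + (1 - p) b²` are the first two moments of a single factor. Hence `E[x_k] → 0` because
`|m₁| < 1`, while `E[x_k²] → ∞` because `m₂ > 1` and `x₀² > 0`.
-/

open MeasureTheory ProbabilityTheory

section

variable {Ω α : Type*} [MeasurableSpace Ω] {P : Measure Ω} [IsProbabilityMeasure P]
  [MeasurableSpace α] [MeasurableSingletonClass α] {a b : α} {p : ℝ}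

lemma integral_comp_of_two_valued {X : Ω → α} (hX : Measurable X)
    (hval : ∀ ω, X ω = a ∨ X ω = b) (hp : 0 ≤ p) (ha : P {ω | X ω = a} = ENNReal.ofReal p)
    (f : α → ℝ) :
    ∫ ω, f (X ω) ∂P = p * f a + (1 - p) * f b := by
  have hs : MeasurableSet {ω | X ω = a} := hX (measurableSet_singleton a)
  have hfX : (fun ω => f (X ω))
      = fun ω => f b + {ω | X ω = a}.indicator (fun _ => f a - f b) ω := by
    funext ω
    rcases hval ω with h | h <;> by_cases h' : X ω = a <;> simp_all
  rw [hfX, integral_add (integrable_const _) ((integrable_const _).indicator hs), integral_const,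
    integral_indicator_const _ hs]
  simp only [measureReal_def, ha, ENNReal.toReal_ofReal hp, measure_univ, ENNReal.toReal_one,
    smul_eq_mul]
  ring

lemma integral_prod_range_comp_of_two_valued {ξ : ℕ → Ω → α} (hmeas : ∀ i, Measurable (ξ i))
    (hindep : iIndepFun ξ P) (hval : ∀ i ω, ξ i ω = a ∨ ξ i ω = b) (hp : 0 ≤ p)
    (ha : ∀ i, P {ω | ξ i ω = a} = ENNReal.ofReal p) {f : α → ℝ} (hf : Measurable f) (k : ℕ) :
    ∫ ω, ∏ i ∈ Finset.range k, f (ξ i ω) ∂P = (p * f a + (1 - p) * f b) ^ k := by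
  calc ∫ ω, ∏ i ∈ Finset.range k, f (ξ i ω) ∂P
      = ∫ ω, ∏ i : Finset.range k, f (ξ i ω) ∂P := by
        simp_rw [← Finset.prod_coe_sort (Finset.range k)]
    _ = ∏ i : Finset.range k, ∫ ω, f (ξ i ω) ∂P :=
        (hindep.precomp Subtype.val_injective).integral_fun_prod_comp
          (fun i => (hmeas i).aemeasurable) (fun _ => hf.aestronglyMeasurable)
    _ = (p * f a + (1 - p) * f b) ^ k := by
        simp [integral_comp_of_two_valued (hmeas _) (hval _) hp (ha _) f]

end

theorem stmt_15_general {Ω : Type*} [MeasurableSpace Ω] (P : Measure Ω)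
    [IsProbabilityMeasure P] (p a b x₀ : ℝ) (hp : p ∈ Set.Icc (0 : ℝ) 1)
    (hx₀ : x₀ ≠ 0)
    (hmean : |p * a + (1 - p) * b| < 1)
    (hsecond : 1 < p * a ^ 2 + (1 - p) * b ^ 2)
    (ξ : ℕ → Ω → ℝ) (hmeas : ∀ i, Measurable (ξ i))
    (hindep : iIndepFun ξ P)
    (hval : ∀ i, ∀ ω, ξ i ω = a ∨ ξ i ω = b)
    (ha : ∀ i, P {ω | ξ i ω = a} = ENNReal.ofReal p) :
    Filter.Tendsto
        (fun k : ℕ => ∫ ω, (x₀ * ∏ i ∈ Finset.range k, ξ i ω) ∂P)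
        Filter.atTop (nhds 0) ∧
      Filter.Tendsto
        (fun k : ℕ => ∫ ω, (x₀ * ∏ i ∈ Finset.range k, ξ i ω) ^ 2 ∂P)
        Filter.atTop Filter.atTop := by
  have first_moment (k : ℕ) :
      ∫ ω, (x₀ * ∏ i ∈ Finset.range k, ξ i ω) ∂P = x₀ * (p * a + (1 - p) * b) ^ k := by
    rw [integral_const_mul,
      integral_prod_range_comp_of_two_valued (f := fun x => x) hmeas hindep hval hp.1 ha
        measurable_id k]
  have second_moment (k : ℕ) :
      ∫ ω, (x₀ * ∏ i ∈ Finset.range k, ξ i ω) ^ 2 ∂P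
        = x₀ ^ 2 * (p * a ^ 2 + (1 - p) * b ^ 2) ^ k := by
    simp only [mul_pow, ← Finset.prod_pow]
    rw [integral_const_mul,
      integral_prod_range_comp_of_two_valued (f := fun x => x ^ 2) hmeas hindep hval hp.1 ha
        (measurable_id.pow_const 2) k]
  simp only [first_moment, second_moment]
  refine ⟨?_, (tendsto_pow_atTop_atTop_of_one_lt hsecond).const_mul_atTop (by positivity)⟩
  simpa using (tendsto_pow_atTop_nhds_zero_of_abs_lt_one hmean).const_mul x₀

theorem stmt_15 {Ω : Type*} [MeasurableSpace Ω] (P : Measure Ω)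
    [IsProbabilityMeasure P] (p a b x₀ : ℝ) (hp : p ∈ Set.Icc (0 : ℝ) 1)
    (hx₀ : x₀ ≠ 0)
    (hmean : |p * a + (1 - p) * b| < 1)
    (hsecond : 1 < p * a ^ 2 + (1 - p) * b ^ 2)
    (ξ : ℕ → Ω → ℝ) (hmeas : ∀ i, Measurable (ξ i))
    (hindep : iIndepFun ξ P)
    (hval : ∀ i, ∀ ω, ξ i ω = a ∨ ξ i ω = b)
    (ha : ∀ i, P {ω | ξ i ω = a} = ENNReal.ofReal p)
    (hb : ∀ i, P {ω | ξ i ω = b} = ENNReal.ofReal (1 - p)) :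
    Filter.Tendsto
        (fun k : ℕ => ∫ ω, (x₀ * ∏ i ∈ Finset.range k, ξ i ω) ∂P)
        Filter.atTop (nhds 0) ∧
      Filter.Tendsto
        (fun k : ℕ => ∫ ω, (x₀ * ∏ i ∈ Finset.range k, ξ i ω) ^ 2 ∂P)
        Filter.atTop Filter.atTop :=
  stmt_15_general P p a b x₀ hp hx₀ hmean hsecond ξ hmeas hindep hval ha
end
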